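/- Let E be a rank-r vector bundle (finite free module of rank r) over a commutative ring R and M an invertible R-module with an isomorphism E ⊗ M ≅ E. Then taking determinants gives det(E) ⊗ M^⊗r ≅ det(E), and hence M^⊗r ≅ R. -/

import Mathlib

/-!
Using `E ≅ Rʳ`, the isomorphism `E ⊗ M ≅ E` becomes `ψ : Mʳ ≅ Rʳ`. The determinant of
`ψ ∘ diag(m₁, …, mᵣ)` is multilinear in the `mᵢ`, hence a linear form `D : ⨂ʳ M → R`. An invertible
module survives reduction modulo a maximal ideal `P`; for `m` with nonzero image in `(R ⧸ P) ⊗ M`,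
the map `ψ ∘ diag(m, …, m)` stays injective over the field `R ⧸ P`, so `D (m ⊗ ⋯ ⊗ m) ∉ P`.
Hence `D` is surjective, and a surjection between the invertible modules `⨂ʳ M` and `R` is an
isomorphism.
-/

open scoped TensorProduct

instance Module.Invertible.tensorPower {R M : Type*} [CommRing R] [AddCommGroup M] [Module R M]
    [Module.Invertible R M] (n : ℕ) : Module.Invertible R (⨂[R]^n M) := by
  induction n with
  | zero => exact .congr (PiTensorProduct.isEmptyEquiv (Fin 0)).symm
  | succ n ih =>
    exact .congr (TensorProduct.congr (.refl R _) (PiTensorProduct.subsingletonEquiv 0).symm ≪≫ₗ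
      TensorPower.mulEquiv)

section DetCompDiag

variable {ι : Type*} [Fintype ι] [DecidableEq ι]

section

variable {R : Type*} [CommRing R] {M : Type*} [AddCommGroup M] [Module R M]

/-- The determinant of `ψ ∘ diag x` (`LinearMap.detCompDiag_eq_det`), defined through
`detRowAlternating` so as to be multilinear in `x`. -/
noncomputable def LinearMap.detCompDiag (ψ : (ι → M) →ₗ[R] (ι → R)) :
    MultilinearMap R (fun _ : ι => M) R :=
  Matrix.detRowAlternating.toMultilinearMap.compLinearMap
    fun j => ψ ∘ₗ LinearMap.single R (fun _ => M) j

theorem LinearMap.detCompDiag_apply (ψ : (ι → M) →ₗ[R] (ι → R)) (x : ι → M) :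
    ψ.detCompDiag x = (Matrix.of fun j i => ψ (Pi.single j (x j)) i).det :=
  rfl

theorem LinearMap.detCompDiag_eq_det (ψ : (ι → M) →ₗ[R] (ι → R)) (x : ι → M) :
    ψ.detCompDiag x =
      LinearMap.det (ψ ∘ₗ LinearMap.piMap fun j => LinearMap.toSpanSingleton R M (x j)) := by
  rw [← LinearMap.det_toMatrix', ← Matrix.det_transpose, detCompDiag_apply]
  congr 1
  ext i j
  simp only [Matrix.transpose_apply, Matrix.of_apply, LinearMap.toMatrix'_apply,
    LinearMap.comp_apply, LinearMap.coe_piMap]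
  have diag_single : Pi.map (fun k => toSpanSingleton R M (x k)) (Pi.single i 1) =
      Pi.single i (x i) := by
    ext k
    rw [Pi.map_apply, Pi.apply_single (fun k => toSpanSingleton R M (x k)) (fun _ => map_zero _)]
    simp
  rw [diag_single]

variable (S : Type*) [CommRing S] [Algebra R S]

noncomputable def LinearMap.baseChangePi (ψ : (ι → M) →ₗ[R] (ι → R)) :
    (ι → S ⊗[R] M) →ₗ[S] (ι → S) :=
  (TensorProduct.piScalarRight R S S ι).toLinearMap ∘ₗ ψ.baseChange S ∘ₗ
    (TensorProduct.piRight R S S fun _ : ι => M).symm.toLinearMap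

theorem LinearMap.baseChangePi_single_one_tmul (ψ : (ι → M) →ₗ[R] (ι → R)) (j : ι) (m : M) :
    ψ.baseChangePi S (Pi.single j (1 ⊗ₜ m)) = fun i => algebraMap R S (ψ (Pi.single j m) i) := by
  funext i
  simp [baseChangePi, Algebra.algebraMap_eq_smul_one]

theorem LinearMap.detCompDiag_baseChangePi (ψ : (ι → M) →ₗ[R] (ι → R)) (x : ι → M) :
    (ψ.baseChangePi S).detCompDiag (fun j => 1 ⊗ₜ x j) = algebraMap R S (ψ.detCompDiag x) := by
  rw [detCompDiag_apply, detCompDiag_apply, RingHom.map_det]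
  congr 1
  ext j i
  simp [baseChangePi_single_one_tmul]

theorem LinearMap.bijective_baseChangePi {ψ : (ι → M) →ₗ[R] (ι → R)} (hψ : Function.Bijective ψ) :
    Function.Bijective (ψ.baseChangePi S) := by
  have : ψ.baseChange S = (LinearEquiv.baseChange R S _ _ (.ofBijective ψ hψ)).toLinearMap := rfl
  simp only [baseChangePi, this, LinearMap.coe_comp, LinearEquiv.coe_coe]
  exact (LinearEquiv.bijective _).comp ((LinearEquiv.bijective _).comp (LinearEquiv.bijective _))

end

theorem LinearMap.detCompDiag_ne_zero {K V : Type*} [Field K] [AddCommGroup V] [Module K V]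
    {ψ : (ι → V) →ₗ[K] (ι → K)} (hψ : Function.Injective ψ)
    {x : ι → V} (hx : ∀ j, x j ≠ 0) : ψ.detCompDiag x ≠ 0 := by
  rw [detCompDiag_eq_det, Ne, LinearMap.det_eq_zero_iff_ker_ne_bot, not_not, LinearMap.ker_eq_bot]
  exact hψ.comp (Function.Injective.piMap fun j => smul_left_injective K (hx j))

theorem Module.Invertible.exists_one_tmul_ne_zero {R M : Type*} [CommRing R] [AddCommGroup M]
    [Module R M] [Module.Invertible R M] (S : Type*) [CommRing S] [Nontrivial S] [Algebra R S] :
    ∃ m : M, (1 : S) ⊗ₜ[R] m ≠ 0 := by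
  by_contra! h
  have : Subsingleton (S ⊗[R] M) := by
    refine subsingleton_of_forall_eq 0 fun z => ?_
    induction z using TensorProduct.induction_on with
    | zero => rfl
    | tmul s m => rw [← mul_one s, ← smul_eq_mul, ← TensorProduct.smul_tmul', h, smul_zero]
    | add z w hz hw => rw [hz, hw, add_zero]
  exact one_ne_zero <|
    FaithfulSMul.eq_of_smul_eq_smul (M := S) (α := S ⊗[R] M) fun _ => Subsingleton.elim _ _

theorem LinearEquiv.surjective_lift_detCompDiag {R M : Type*} [CommRing R] [AddCommGroup M]
    [Module R M] [Module.Invertible R M] (ψ : (ι → M) ≃ₗ[R] (ι → R)) :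
    Function.Surjective (PiTensorProduct.lift (ψ : (ι → M) →ₗ[R] (ι → R)).detCompDiag) := by
  rw [← LinearMap.range_eq_top]
  by_contra hne
  obtain ⟨P, hP, hle⟩ := Ideal.exists_le_maximal _ hne
  let := Ideal.Quotient.field P
  obtain ⟨m, hm⟩ := Module.Invertible.exists_one_tmul_ne_zero (R := R) (M := M) (R ⧸ P)
  have hdet := LinearMap.detCompDiag_ne_zero (K := R ⧸ P)
    (LinearMap.bijective_baseChangePi (R ⧸ P) ψ.bijective).injective fun _ : ι => hm
  rw [LinearMap.detCompDiag_baseChangePi, Ne, Ideal.Quotient.algebraMap_eq,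
    Ideal.Quotient.eq_zero_iff_mem] at hdet
  exact hdet (hle ⟨PiTensorProduct.tprod R fun _ => m, PiTensorProduct.lift.tprod _⟩)

end DetCompDiag

theorem tensor_power_trivial_of_rank_iso_general
    {R : Type*} [CommRing R]
    {E M M' : Type*} [AddCommGroup E] [Module R E]
    [AddCommGroup M] [Module R M] [AddCommGroup M'] [Module R M']
    (r : ℕ) (hE : Nonempty (E ≃ₗ[R] (Fin r → R)))
    (hinv : Nonempty ((M ⊗[R] M') ≃ₗ[R] R))
    (hiso : Nonempty ((E ⊗[R] M) ≃ₗ[R] E)) :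
    Nonempty ((⨂[R]^r M) ≃ₗ[R] R) := by
  obtain ⟨eE⟩ := hE
  obtain ⟨eM⟩ := hinv
  obtain ⟨eEM⟩ := hiso
  have : Module.Invertible R M := .left eM
  let ψ : (Fin r → M) ≃ₗ[R] (Fin r → R) :=
    (TensorProduct.piScalarRight R R M (Fin r)).symm ≪≫ₗ TensorProduct.comm R M (Fin r → R) ≪≫ₗ
      TensorProduct.congr eE.symm (.refl R M) ≪≫ₗ eEM ≪≫ₗ eE
  exact ⟨.ofBijective _ (Module.Invertible.bijective_of_surjective ψ.surjective_lift_detCompDiag)⟩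

/-- If `E` is a finite free module of rank `r ≥ 1` over a commutative ring `R` and `M` is an
invertible `R`-module with `E ⊗ M ≅ E`, then `M^⊗r ≅ R`: the determinant argument shows the
class of `M` in `Pic(R)` is killed by `r`. -/
theorem tensor_power_trivial_of_rank_iso
    {R : Type*} [CommRing R] [Nontrivial R]
    {E M M' : Type*} [AddCommGroup E] [Module R E]
    [AddCommGroup M] [Module R M] [AddCommGroup M'] [Module R M']
    (r : ℕ) (hr : 1 ≤ r) (hE : Nonempty (E ≃ₗ[R] (Fin r → R)))
    (hinv : Nonempty ((M ⊗[R] M') ≃ₗ[R] R))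
    (hiso : Nonempty ((E ⊗[R] M) ≃ₗ[R] E)) :
    Nonempty ((⨂[R]^r M) ≃ₗ[R] R) :=
  tensor_power_trivial_of_rank_iso_general r hE hinv hiso
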